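/- The probability density p(t) = (1/(2at))·(2t·log(a/(Γ(δ/2)·t^{δ/2}·2^{δ/2−1})))^{δ/2} on the interval [0, T_{a,δ}] integrates to 1, i.e. ∫₀^{T_{a,δ}} (1/(2at))·ψ_{a,δ}(t)^δ dt = 1, where ψ_{a,δ}(t)² = 2t·log(a/(Γ(δ/2)·t^{δ/2}·2^{δ/2−1})) and T_{a,δ} = (a/(Γ(δ/2)·2^{δ/2−1}))^{2/δ}. -/

import Mathlib

/-!
Since `T ^ (δ/2) = a / (Γ(δ/2) 2^(δ/2-1))`, the logarithm in the integrand is `(δ/2) log (T/t)`, so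
the integrand is a constant times `t ^ (δ/2 - 1) * log (T/t) ^ (δ/2)`. The substitution
`t = T e^{-x}` turns `∫₀ᵀ t ^ (p-1) log (T/t) ^ q dt` into the Gamma integral
`T ^ p ∫₀^∞ x ^ q e^{-p x} dx = T ^ p Γ(q+1) / p ^ (q+1)`, and `Γ(δ/2 + 1) = (δ/2) Γ(δ/2)` makes
the constants cancel.
-/

open Real MeasureTheory

noncomputable def besselT (a δ : ℝ) : ℝ :=
  (a / (Real.Gamma (δ / 2) * 2 ^ (δ / 2 - 1))) ^ (2 / δ)

open Set

lemma image_mul_exp_neg_Ici {T : ℝ} (hT : 0 < T) :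
    (fun x ↦ T * exp (-x)) '' Ici 0 = Ioc 0 T := by
  have : (fun x ↦ T * exp (-x)) = (T * ·) ∘ exp ∘ Neg.neg := rfl
  rw [this, image_comp, image_comp, image_neg_Ici, neg_zero, image_exp_Iic, exp_zero,
    image_mul_left_Ioc hT, mul_zero, mul_one]

theorem integral_comp_mul_exp_neg_Ici {E : Type*} [NormedAddCommGroup E] [NormedSpace ℝ E]
    (g : ℝ → E) {T : ℝ} (hT : 0 < T) :
    ∫ x in Ici 0, (T * exp (-x)) • g (T * exp (-x)) = ∫ t in Ioc 0 T, g t := by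
  rw [← image_mul_exp_neg_Ici hT, integral_image_eq_integral_abs_deriv_smul measurableSet_Ici
    (fun x _ ↦ ((hasDerivAt_neg x).exp.const_mul T).hasDerivWithinAt)
    (fun x _ y _ h ↦ neg_injective (exp_injective (mul_left_cancel₀ hT.ne' h)))]
  refine setIntegral_congr_fun measurableSet_Ici fun x _ ↦ ?_
  simp [abs_of_pos hT]

theorem integral_Ioc_rpow_mul_log_div_rpow {T p q : ℝ} (hT : 0 < T) (hp : 0 < p) (hq : -1 < q) :
    ∫ t in Ioc 0 T, t ^ (p - 1) * log (T / t) ^ q =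
      T ^ p * ((1 / p) ^ (q + 1) * Gamma (q + 1)) := by
  rw [← integral_comp_mul_exp_neg_Ici _ hT, ← integral_rpow_mul_exp_neg_mul_Ioi (by linarith) hp,
    ← integral_const_mul, ← integral_Ici_eq_integral_Ioi]
  refine setIntegral_congr_fun measurableSet_Ici fun x _ ↦ ?_
  have hlog : log (T / (T * exp (-x))) = x := by
    rw [div_mul_cancel_left₀ hT.ne', ← exp_neg, neg_neg, log_exp]
  have hexp : exp (-x) ^ (p - 1) = exp (-(p * x)) / exp (-x) := by
    rw [← exp_mul, ← exp_sub]; ring_nf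
  rw [smul_eq_mul, hlog, add_sub_cancel_right, mul_rpow hT.le (exp_pos _).le, hexp,
    rpow_sub_one hT.ne']
  field_simp

lemma besselT_pos {a δ : ℝ} (ha : 0 < a) (hδ : 0 < δ) : 0 < besselT a δ := by
  have := Gamma_pos_of_pos (half_pos hδ)
  unfold besselT; positivity

lemma besselT_rpow {a δ : ℝ} (ha : 0 < a) (hδ : 0 < δ) :
    besselT a δ ^ (δ / 2) = a / (Gamma (δ / 2) * 2 ^ (δ / 2 - 1)) := by
  have := Gamma_pos_of_pos (half_pos hδ)
  rw [besselT, ← rpow_mul (by positivity), div_mul_div_cancel₀ hδ.ne', div_self two_ne_zero,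
    rpow_one]

theorem stmt_3 (a δ : ℝ) (ha : 0 < a) (hδ : 0 < δ) :
    ∫ t in Set.Ioc (0 : ℝ) (besselT a δ),
      (1 / (2 * a * t)) *
        (2 * t * Real.log (a / (Real.Gamma (δ / 2) * t ^ (δ / 2) * 2 ^ (δ / 2 - 1)))) ^ (δ / 2)
      = 1 := by
  set T := besselT a δ
  have hT : 0 < T := besselT_pos ha hδ
  have hTpow : T ^ (δ / 2) = a / (Gamma (δ / 2) * 2 ^ (δ / 2 - 1)) := besselT_rpow ha hδ
  have hintegrand : ∀ t ∈ Ioc 0 T,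
      1 / (2 * a * t) *
          (2 * t * log (a / (Gamma (δ / 2) * t ^ (δ / 2) * 2 ^ (δ / 2 - 1)))) ^ (δ / 2)
        = δ ^ (δ / 2) / (2 * a) * (t ^ (δ / 2 - 1) * log (T / t) ^ (δ / 2)) := by
    rintro t ⟨ht, htT⟩
    have hlog :
        log (a / (Gamma (δ / 2) * t ^ (δ / 2) * 2 ^ (δ / 2 - 1))) = δ / 2 * log (T / t) := by
      rw [← log_rpow (div_pos hT ht), div_rpow hT.le ht.le, hTpow]
      ring_nf
    have hL : 0 ≤ log (T / t) := log_nonneg ((one_le_div ht).2 htT)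
    rw [hlog, show 2 * t * (δ / 2 * log (T / t)) = δ * t * log (T / t) by ring,
      mul_rpow (by positivity) hL, mul_rpow hδ.le ht.le, rpow_sub_one ht.ne']
    field_simp
  rw [setIntegral_congr_fun measurableSet_Ioc hintegrand, integral_const_mul,
    integral_Ioc_rpow_mul_log_div_rpow hT (half_pos hδ) (by linarith), hTpow,
    Gamma_add_one (half_pos hδ).ne', one_div_div]
  have htwo_rpow : (2:ℝ) ^ (δ / 2) = 2 ^ (δ / 2 - 1) * 2 := by
    rw [← rpow_add_one two_ne_zero]; ring_nf
  rw [rpow_add_one (by positivity), div_rpow two_pos.le hδ.le, htwo_rpow]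
  field_simp
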